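/- arXiv:1404.1894 — 2 statements merged into one kernel-verified Lean document; each statement's English description precedes it below -/
import Mathlib

section
/- For non-negative integers k, ℓ, r, s, the normally ordered product satisfies (a⁺)^k a^ℓ (a⁺)^r a^s = Σ_{i=0}^{min(ℓ,r)} i!·C(ℓ,i)·C(r,i)·(a⁺)^{k+r-i} a^{ℓ+s-i}, where a, a⁺ are realized as the derivative operator D and multiplication-by-x operator X on polynomials (so the claim is X^k D^ℓ X^r D^s = Σ_{i=0}^{min(ℓ,r)} i!·C(ℓ,i)·C(r,i)·X^{k+r-i} D^{ℓ+s-i} as operators on ℂ[x]). -/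
/-- Multiplication by `x` as a linear endomorphism of `ℂ[x]`. -/
noncomputable def Xop : Module.End ℂ (Polynomial ℂ) :=
  LinearMap.mulLeft ℂ (Polynomial.X : Polynomial ℂ)

/-- Formal differentiation as a linear endomorphism of `ℂ[x]`. -/
noncomputable def Dop : Module.End ℂ (Polynomial ℂ) :=
  Polynomial.derivative


lemma DX_comm : Dop * Xop = Xop * Dop + 1 := by
  apply LinearMap.ext
  intro p
  simp [Dop, Xop, Module.End.mul_apply, Polynomial.derivative_mul]
  ring

lemma Dpow_X (n : ℕ) : Dop ^ n * Xop = Xop * Dop ^ n + (n : ℂ) • Dop ^ (n - 1) := by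
  induction n with
  | zero => simp
  | succ n ih =>
    rw [pow_succ, mul_assoc, DX_comm, mul_add, mul_one, ← mul_assoc, ih,
      add_mul, smul_mul_assoc, mul_assoc, ← pow_succ, Nat.add_sub_cancel]
    rcases n with _ | m
    · simp
    · rw [Nat.add_sub_cancel, ← pow_succ]
      push_cast
      module

lemma natid (l i r : ℕ) :
    (i+1).factorial * l.choose (i+1) * (r+1).choose (i+1)
      = (i+1).factorial * l.choose (i+1) * r.choose (i+1)
        + (l - i) * (i.factorial * l.choose i * r.choose i) := by
  have h : (i+1).factorial * l.choose (i+1) = (l - i) * (i.factorial * l.choose i) := by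
    rw [Nat.factorial_succ]
    calc (i+1) * i.factorial * l.choose (i+1)
        = i.factorial * (l.choose (i+1) * (i+1)) := by ring
      _ = i.factorial * (l.choose i * (l - i)) := by rw [Nat.choose_succ_right_eq]
      _ = (l-i) * (i.factorial * l.choose i) := by ring
  rw [Nat.choose_succ_succ, Nat.mul_add, add_comm]
  congr 1
  rw [h]
  ring

lemma Dpow_Xpow (l r : ℕ) :
    Dop ^ l * Xop ^ r = ∑ i ∈ Finset.range (l + 1),
      ((i.factorial * l.choose i * r.choose i : ℕ) : ℂ) • (Xop ^ (r - i) * Dop ^ (l - i)) := by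
  induction r with
  | zero =>
    rw [Finset.sum_eq_single 0]
    · simp
    · intro i hi hne
      have : 0 < i := Nat.pos_of_ne_zero hne
      simp [Nat.choose_eq_zero_of_lt this]
    · intro h
      exact absurd (Finset.mem_range.mpr (by omega)) h
  | succ r ih =>
    rw [pow_succ, ← mul_assoc, ih, Finset.sum_mul]
    have hterm : ∀ i ∈ Finset.range (l + 1),
        (((i.factorial * l.choose i * r.choose i : ℕ) : ℂ) • (Xop ^ (r - i) * Dop ^ (l - i))) * Xop
          = ((i.factorial * l.choose i * r.choose i : ℕ) : ℂ) • ((Xop ^ (r - i) * Xop) * Dop ^ (l - i))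
            + (((l - i : ℕ) : ℂ) * ((i.factorial * l.choose i * r.choose i : ℕ) : ℂ)) •
              (Xop ^ (r - i) * Dop ^ (l - i - 1)) := by
      intro i _
      rw [smul_mul_assoc, mul_assoc (Xop ^ (r - i)) (Dop ^ (l - i)) Xop, Dpow_X (l - i),
        mul_add, mul_smul_comm, smul_add, smul_smul,
        mul_comm (((i.factorial * l.choose i * r.choose i : ℕ) : ℂ)),
        ← mul_assoc (Xop ^ (r - i)) Xop (Dop ^ (l - i))]
    rw [Finset.sum_congr rfl hterm, Finset.sum_add_distrib,
      Finset.sum_range_succ' (fun i => ((i.factorial * l.choose i * r.choose i : ℕ) : ℂ) • ((Xop ^ (r - i) * Xop) * Dop ^ (l - i))) l,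
      Finset.sum_range_succ (fun i => (((l - i : ℕ) : ℂ) * ((i.factorial * l.choose i * r.choose i : ℕ) : ℂ)) • (Xop ^ (r - i) * Dop ^ (l - i - 1))) l,
      Finset.sum_range_succ' (fun i => ((i.factorial * l.choose i * (r+1).choose i : ℕ) : ℂ) • (Xop ^ (r + 1 - i) * Dop ^ (l - i))) l]
    simp only [Nat.sub_self, Nat.cast_zero, zero_mul, zero_smul, add_zero]
    have h0 : ((Nat.factorial 0 * l.choose 0 * r.choose 0 : ℕ) : ℂ) • ((Xop ^ (r - 0) * Xop) * Dop ^ (l - 0))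
        = ((Nat.factorial 0 * l.choose 0 * (r+1).choose 0 : ℕ) : ℂ) • (Xop ^ (r + 1 - 0) * Dop ^ (l - 0)) := by
      simp [← pow_succ]
    rw [h0, add_right_comm, ← Finset.sum_add_distrib]
    congr 1
    apply Finset.sum_congr rfl
    intro i hi
    have hil : i < l := Finset.mem_range.mp hi
    have hsub1 : l - (i + 1) = l - i - 1 := by omega
    have hsub2 : r + 1 - (i + 1) = r - i := by omega
    by_cases hir : i + 1 ≤ r
    · have hx : r - (i + 1) + 1 = r - i := by omega
      rw [← pow_succ, hx, hsub1, hsub2, ← add_smul]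
      congr 1
      norm_cast
      exact (natid l i r).symm
    · have hri : r < i + 1 := by omega
      have hri2 : r - i = 0 := by omega
      rw [Nat.choose_eq_zero_of_lt hri, hsub1, hsub2, hri2]
      simp only [Nat.mul_zero, Nat.cast_zero, zero_smul, zero_add]
      congr 1
      norm_cast
      have h2 := natid l i r
      rw [Nat.choose_eq_zero_of_lt hri, Nat.mul_zero, zero_add] at h2
      exact h2.symm

/-- Normal ordering of `(a⁺)^k a^ℓ (a⁺)^r a^s` realized as operators `X^k D^ℓ X^r D^s` on `ℂ[x]`. -/
theorem normal_ordering_structure_constants (k l r s : ℕ) :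
    Xop ^ k * Dop ^ l * Xop ^ r * Dop ^ s =
      ∑ i ∈ Finset.range (min l r + 1),
        ((i.factorial * l.choose i * r.choose i : ℕ) : ℂ) •
          (Xop ^ (k + r - i) * Dop ^ (l + s - i)) := by
  rw [mul_assoc (Xop ^ k), Dpow_Xpow, Finset.mul_sum, Finset.sum_mul]
  rw [Finset.sum_subset (Finset.range_subset_range.mpr (by omega : min l r + 1 ≤ l + 1))]
  · apply Finset.sum_congr rfl
    intro i hi
    have hil : i ≤ l := by simpa using Nat.lt_succ_iff.mp (Finset.mem_range.mp hi)
    rw [mul_smul_comm, smul_mul_assoc]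
    by_cases hir : i ≤ r
    · congr 1
      rw [show Xop ^ k * (Xop ^ (r - i) * Dop ^ (l - i)) * Dop ^ s
            = (Xop ^ k * Xop ^ (r - i)) * (Dop ^ (l - i) * Dop ^ s) by
          rw [mul_assoc, mul_assoc, mul_assoc],
        ← pow_add, ← pow_add, show k + (r - i) = k + r - i by omega,
        show l - i + s = l + s - i by omega]
    · have : r.choose i = 0 := Nat.choose_eq_zero_of_lt (by omega)
      simp [this]
  · intro i hi hni
    have h1 : i ≤ l := by simpa using Nat.lt_succ_iff.mp (Finset.mem_range.mp hi)
    have h2 : min l r < i := by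
      by_contra h
      exact hni (Finset.mem_range.mpr (by omega))
    have : r.choose i = 0 := Nat.choose_eq_zero_of_lt (by omega)
    simp [this]
end

section
/- For any fixed rational ρ, the set of Riordan arrays of the form (g^ρ, x·g) with g a unit power series with g(0)=1 is a subgroup of the Riordan group: it is closed under the Riordan product and contains the identity and inverses. In particular, if h is the compositional inverse of x·g, then the inverse of (g^ρ, x·g) is ((g∘h)^{-ρ}, h), which again has the required form. -/
/-! Composition with a series of zero constant term is `PowerSeries.subst`, a ring homomorphism,
and `g ^ α` is the binomial series `(1 + X) ^ α` composed with `g - 1`. Hence `(g ^ α) ∘ a = (g ∘ a) ^ α`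
and `g ^ (α + β) = g ^ α * g ^ β`. Multiplicativity `(u * v) ^ α = u ^ α * v ^ α` holds because both
sides solve `u v F' = α (u v)' F` with `F(0) = 1`, and such a linear equation has a unique solution.
So `(g₁ ^ ρ, X g₁) * (g₂ ^ ρ, X g₂) = (g₃ ^ ρ, X g₃)` with `g₃ = g₁ * (g₂ ∘ X g₁)`; and if `h` is the
compositional inverse of `X g`, then `h * (g ∘ h) = X`, so `h = X * (g ∘ h)⁻¹` while
`(g ∘ h) ^ (-ρ) = ((g ∘ h)⁻¹) ^ ρ`. -/

open PowerSeries

/-- Formal composition `f ∘ a` of power series (substituting `a`, assumed of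
positive order, into `f`): the coefficient of `xⁿ` is `Σ_{k≤n} f_k·[xⁿ]aᵏ`. -/
noncomputable def pscomp (a f : PowerSeries ℂ) : PowerSeries ℂ :=
  PowerSeries.mk fun n =>
    ∑ k ∈ Finset.range (n + 1), PowerSeries.coeff k f * PowerSeries.coeff n (a ^ k)

/-- The Riordan product `(g,f)*(h,ℓ) = (g·(h∘f), ℓ∘f)`. -/
noncomputable def rprod (p q : PowerSeries ℂ × PowerSeries ℂ) :
    PowerSeries ℂ × PowerSeries ℂ :=
  (p.1 * pscomp p.2 q.1, pscomp p.2 q.2)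

/-- The formal binomial series `(1+x)^α = Σ_n (α(α-1)⋯(α-n+1)/n!)·xⁿ`. -/
noncomputable def binSeries (α : ℂ) : PowerSeries ℂ :=
  PowerSeries.mk fun n => (∏ i ∈ Finset.range n, (α - i)) / (n.factorial : ℂ)

/-- The formal power `g^α = (1 + (g-1))^α` for `g` with constant term `1`. -/
noncomputable def fpow (g : PowerSeries ℂ) (α : ℂ) : PowerSeries ℂ :=
  pscomp (g - 1) (binSeries α)

section Composition

variable {a b : PowerSeries ℂ}

lemma coeff_pow_eq_zero_of_lt (ha : constantCoeff a = 0) {n k : ℕ} (h : n < k) :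
    coeff n (a ^ k) = 0 :=
  X_pow_dvd_iff.mp (pow_dvd_pow_of_dvd (X_dvd_iff.mpr ha) k) n h

lemma pscomp_eq_subst (ha : constantCoeff a = 0) (f : PowerSeries ℂ) :
    pscomp a f = f.subst a := by
  ext n
  rw [coeff_subst' (HasSubst.of_constantCoeff_zero' ha), pscomp, coeff_mk,
    finsum_eq_sum_of_support_subset _ (s := Finset.range (n + 1)) ?_]
  · simp only [smul_eq_mul]
  · intro k hk
    by_contra hkn
    simp only [Finset.coe_range, Set.mem_Iio, not_lt] at hkn
    simp [coeff_pow_eq_zero_of_lt ha (Nat.lt_of_succ_le hkn)] at hk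

lemma constantCoeff_pscomp (f : PowerSeries ℂ) : constantCoeff (pscomp a f) = constantCoeff f := by
  rw [← coeff_zero_eq_constantCoeff_apply, pscomp, coeff_mk]
  simp

lemma pscomp_zero_left (f : PowerSeries ℂ) : pscomp 0 f = C (constantCoeff f) := by
  rw [pscomp_eq_subst (map_zero _), subst_zero_eq_C_constantCoeff]
  rfl

lemma pscomp_one (ha : constantCoeff a = 0) : pscomp a 1 = 1 := by
  rw [pscomp_eq_subst ha, ← coe_substAlgHom (HasSubst.of_constantCoeff_zero' ha), map_one]

lemma pscomp_mul (ha : constantCoeff a = 0) (f g : PowerSeries ℂ) :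
    pscomp a (f * g) = pscomp a f * pscomp a g := by
  simp only [pscomp_eq_subst ha, subst_mul (HasSubst.of_constantCoeff_zero' ha)]

lemma pscomp_add (ha : constantCoeff a = 0) (f g : PowerSeries ℂ) :
    pscomp a (f + g) = pscomp a f + pscomp a g := by
  simp only [pscomp_eq_subst ha, subst_add (HasSubst.of_constantCoeff_zero' ha)]

lemma pscomp_sub (ha : constantCoeff a = 0) (f g : PowerSeries ℂ) :
    pscomp a (f - g) = pscomp a f - pscomp a g := by
  simp only [pscomp_eq_subst ha, subst_sub (HasSubst.of_constantCoeff_zero' ha)]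

lemma pscomp_C_mul (ha : constantCoeff a = 0) (c : ℂ) (f : PowerSeries ℂ) :
    pscomp a (C c * f) = C c * pscomp a f := by
  simp only [pscomp_eq_subst ha, ← smul_eq_C_mul, subst_smul (HasSubst.of_constantCoeff_zero' ha)]

lemma pscomp_X (ha : constantCoeff a = 0) : pscomp a X = a := by
  rw [pscomp_eq_subst ha, subst_X (HasSubst.of_constantCoeff_zero' ha)]

lemma pscomp_X_left (f : PowerSeries ℂ) : pscomp X f = f := by
  rw [pscomp_eq_subst constantCoeff_X, X_subst]

lemma pscomp_pscomp (ha : constantCoeff a = 0) (hb : constantCoeff b = 0) (f : PowerSeries ℂ) :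
    pscomp a (pscomp b f) = pscomp (pscomp a b) f := by
  rw [pscomp_eq_subst (a := pscomp a b) (by rw [constantCoeff_pscomp, hb]), pscomp_eq_subst hb,
    pscomp_eq_subst ha, pscomp_eq_subst ha,
    subst_comp_subst_apply (HasSubst.of_constantCoeff_zero' hb)
      (HasSubst.of_constantCoeff_zero' ha)]

lemma derivative_pscomp (ha : constantCoeff a = 0) (f : PowerSeries ℂ) :
    d⁄dX ℂ (pscomp a f) = pscomp a (d⁄dX ℂ f) * d⁄dX ℂ a := by
  simp only [pscomp_eq_subst ha, derivative_subst (HasSubst.of_constantCoeff_zero' ha)]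

end Composition

lemma eq_of_mul_derivative_eq {K : Type*} [Field K] [CharZero K] {g d f₁ f₂ : PowerSeries K}
    (hg : g ≠ 0) (hf₂ : constantCoeff f₂ ≠ 0) (h₁ : g * d⁄dX K f₁ = d * f₁)
    (h₂ : g * d⁄dX K f₂ = d * f₂) (h₀ : constantCoeff f₁ = constantCoeff f₂) : f₁ = f₂ := by
  have hinv : f₂ * f₂⁻¹ = 1 := PowerSeries.mul_inv_cancel f₂ hf₂
  have hderiv : d⁄dX K (f₁ * f₂⁻¹) = d⁄dX K 1 := by
    refine mul_left_cancel₀ hg ?_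
    rw [derivative_one, Derivation.leibniz, derivative_inv', smul_eq_mul, smul_eq_mul]
    linear_combination f₂⁻¹ * h₁ - f₁ * f₂⁻¹ ^ 2 * h₂ - f₁ * f₂⁻¹ * d * hinv
  have hquot : f₁ * f₂⁻¹ = 1 := by
    refine derivative.ext hderiv ?_
    rw [map_mul, constantCoeff_inv, h₀, map_one, mul_inv_cancel₀ hf₂]
  calc f₁ = f₁ * f₂⁻¹ * f₂ := by rw [mul_assoc, mul_comm f₂⁻¹, hinv, mul_one]
    _ = f₂ := by rw [hquot, one_mul]

section Binomial

lemma coeff_binSeries (α : ℂ) (n : ℕ) :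
    coeff n (binSeries α) = (∏ i ∈ Finset.range n, (α - i)) / (n.factorial : ℂ) :=
  coeff_mk _ _

lemma binSeries_eq_binomialSeries (α : ℂ) : binSeries α = PowerSeries.binomialSeries ℂ α := by
  ext n
  rw [coeff_binSeries, binomialSeries_coeff, Ring.choose_eq_smul, smul_eq_mul, smul_eq_mul, mul_one,
    ← Polynomial.aeval_eq_smeval, ← Polynomial.aeval_map_algebraMap ℂ, descPochhammer_map,
    Polynomial.aeval_def, Algebra.algebraMap_self, Polynomial.eval₂_id,
    descPochhammer_eval_eq_prod_range, div_eq_inv_mul]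

lemma binSeries_add (α β : ℂ) : binSeries (α + β) = binSeries α * binSeries β := by
  simp only [binSeries_eq_binomialSeries, binomialSeries_add]

lemma binSeries_zero : binSeries 0 = 1 := by
  rw [binSeries_eq_binomialSeries, binomialSeries_zero]

lemma coeff_succ_binSeries (α : ℂ) (n : ℕ) :
    (n + 1) * coeff (n + 1) (binSeries α) = (α - n) * coeff n (binSeries α) := by
  rw [coeff_binSeries, coeff_binSeries, Finset.prod_range_succ, Nat.factorial_succ]
  have : (n.factorial : ℂ) ≠ 0 := Nat.cast_ne_zero.mpr n.factorial_ne_zero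
  field_simp
  push_cast
  ring

lemma one_add_X_mul_derivative_binSeries (α : ℂ) :
    (1 + X) * d⁄dX ℂ (binSeries α) = C α * binSeries α := by
  ext n
  rw [add_mul, one_mul, map_add, coeff_C_mul, coeff_derivative]
  cases n with
  | zero => simpa using coeff_succ_binSeries α 0
  | succ n =>
    rw [coeff_succ_X_mul, coeff_derivative]
    have h := coeff_succ_binSeries α (n + 1)
    push_cast at h ⊢
    linear_combination h

end Binomial

section Power

variable {g u v : PowerSeries ℂ}

lemma constantCoeff_fpow (g : PowerSeries ℂ) (α : ℂ) : constantCoeff (fpow g α) = 1 := by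
  rw [fpow, constantCoeff_pscomp, ← coeff_zero_eq_constantCoeff_apply, coeff_binSeries]
  simp

lemma fpow_add (hg : constantCoeff g = 1) (α β : ℂ) :
    fpow g (α + β) = fpow g α * fpow g β := by
  rw [fpow, binSeries_add, pscomp_mul (by simp [hg]), fpow, fpow]

lemma fpow_zero (hg : constantCoeff g = 1) : fpow g 0 = 1 := by
  rw [fpow, binSeries_zero, pscomp_one (by simp [hg])]

lemma fpow_one (α : ℂ) : fpow 1 α = 1 := by
  rw [fpow, sub_self, pscomp_zero_left, ← coeff_zero_eq_constantCoeff_apply, coeff_binSeries]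
  simp

lemma pscomp_fpow {a : PowerSeries ℂ} (ha : constantCoeff a = 0) (hg : constantCoeff g = 1)
    (α : ℂ) : pscomp a (fpow g α) = fpow (pscomp a g) α := by
  rw [fpow, pscomp_pscomp ha (by simp [hg]), pscomp_sub ha, pscomp_one ha, fpow]

lemma mul_derivative_fpow (hg : constantCoeff g = 1) (α : ℂ) :
    g * d⁄dX ℂ (fpow g α) = C α * d⁄dX ℂ g * fpow g α := by
  have hg₁ : constantCoeff (g - 1) = 0 := by simp [hg]
  have hpscomp : pscomp (g - 1) (1 + X) = g := by
    rw [pscomp_add hg₁, pscomp_one hg₁, pscomp_X hg₁, add_sub_cancel]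
  calc g * d⁄dX ℂ (fpow g α)
      = pscomp (g - 1) ((1 + X) * d⁄dX ℂ (binSeries α)) * d⁄dX ℂ g := by
        rw [fpow, derivative_pscomp hg₁, pscomp_mul hg₁, hpscomp, map_sub, derivative_one,
          sub_zero, mul_assoc]
    _ = C α * d⁄dX ℂ g * fpow g α := by
        rw [one_add_X_mul_derivative_binSeries, pscomp_C_mul hg₁, fpow]
        ring

lemma fpow_mul (hu : constantCoeff u = 1) (hv : constantCoeff v = 1) (α : ℂ) :
    fpow (u * v) α = fpow u α * fpow v α := by
  have huv : constantCoeff (u * v) = 1 := by rw [map_mul, hu, hv, one_mul]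
  refine eq_of_mul_derivative_eq (g := u * v) (d := C α * d⁄dX ℂ (u * v)) ?_ ?_ ?_ ?_ ?_
  · exact ne_zero_of_map (f := constantCoeff) (by rw [huv]; exact one_ne_zero)
  · rw [map_mul, constantCoeff_fpow, constantCoeff_fpow, one_mul]; exact one_ne_zero
  · exact mul_derivative_fpow huv α
  · simp only [Derivation.leibniz, smul_eq_mul]
    linear_combination u * fpow u α * mul_derivative_fpow hv α +
      v * fpow v α * mul_derivative_fpow hu α
  · rw [constantCoeff_fpow, map_mul, constantCoeff_fpow, constantCoeff_fpow, one_mul]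

lemma fpow_neg (hu : constantCoeff u = 1) (α : ℂ) : fpow u (-α) = fpow u⁻¹ α := by
  have hleft : fpow u (-α) * fpow u α = 1 := by
    rw [← fpow_add hu, neg_add_cancel, fpow_zero hu]
  have hright : fpow u α * fpow u⁻¹ α = 1 := by
    rw [← fpow_mul hu (by rw [constantCoeff_inv, hu, inv_one]),
      PowerSeries.mul_inv_cancel u (by rw [hu]; exact one_ne_zero), fpow_one]
  exact left_inv_eq_right_inv hleft hright

end Power

section Riordan

variable {g h g₁ g₂ : PowerSeries ℂ}

lemma rprod_fpow_X_mul (hg₁ : constantCoeff g₁ = 1) (hg₂ : constantCoeff g₂ = 1) (α : ℂ) :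
    rprod (fpow g₁ α, X * g₁) (fpow g₂ α, X * g₂) =
      (fpow (g₁ * pscomp (X * g₁) g₂) α, X * (g₁ * pscomp (X * g₁) g₂)) := by
  have ha : constantCoeff (X * g₁) = 0 := by simp
  rw [rprod, pscomp_fpow ha hg₂, pscomp_mul ha, pscomp_X ha,
    fpow_mul hg₁ (by rw [constantCoeff_pscomp, hg₂]), mul_assoc]

lemma rprod_fpow_X_mul_inverse (hg : constantCoeff g = 1) (hh : constantCoeff h = 0)
    (hinv : pscomp (X * g) h = X) (α : ℂ) :
    rprod (fpow g α, X * g) (fpow (pscomp h g) (-α), h) = (1, X) := by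
  rw [rprod, pscomp_fpow (by simp) (by rw [constantCoeff_pscomp, hg]), pscomp_pscomp (by simp) hh,
    hinv, pscomp_X_left, ← fpow_add hg, add_neg_cancel, fpow_zero hg]

lemma eq_X_mul_inv_pscomp (hg : constantCoeff g ≠ 0) (hh : constantCoeff h = 0)
    (hinv : pscomp h (X * g) = X) : h = X * (pscomp h g)⁻¹ := by
  have hmul : h * pscomp h g = X := by
    rwa [pscomp_mul hh, pscomp_X hh] at hinv
  rw [← hmul, mul_assoc, PowerSeries.mul_inv_cancel _ (by rwa [constantCoeff_pscomp]), mul_one]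

end Riordan

/-- For fixed `ρ ∈ ℚ`, the Riordan arrays `(g^ρ, x·g)` with `g(0) = 1` form a
subgroup: the set contains the identity, is closed under the Riordan product,
and the inverse `((g∘h)^{-ρ}, h)` of `(g^ρ, x·g)` again has the required form. -/
theorem power_rho_striped_subgroup (ρ : ℚ) :
    (∀ g₁ g₂ : PowerSeries ℂ,
        PowerSeries.constantCoeff g₁ = 1 → PowerSeries.constantCoeff g₂ = 1 →
        ∃ g₃ : PowerSeries ℂ, PowerSeries.constantCoeff g₃ = 1 ∧
          rprod (fpow g₁ (ρ : ℂ), PowerSeries.X * g₁)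
              (fpow g₂ (ρ : ℂ), PowerSeries.X * g₂) =
            (fpow g₃ (ρ : ℂ), PowerSeries.X * g₃)) ∧
    (fpow (1 : PowerSeries ℂ) (ρ : ℂ), (PowerSeries.X : PowerSeries ℂ) * 1) =
      ((1 : PowerSeries ℂ), PowerSeries.X) ∧
    (∀ g h : PowerSeries ℂ,
        PowerSeries.constantCoeff g = 1 → PowerSeries.constantCoeff h = 0 →
        pscomp h (PowerSeries.X * g) = PowerSeries.X →
        pscomp (PowerSeries.X * g) h = PowerSeries.X →
        rprod (fpow g (ρ : ℂ), PowerSeries.X * g)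
            (fpow (pscomp h g) (-(ρ : ℂ)), h) = (1, PowerSeries.X) ∧
          ∃ g' : PowerSeries ℂ, PowerSeries.constantCoeff g' = 1 ∧
            (fpow (pscomp h g) (-(ρ : ℂ)), h) =
              (fpow g' (ρ : ℂ), PowerSeries.X * g')) := by
  refine ⟨fun g₁ g₂ hg₁ hg₂ => ?_, by rw [fpow_one, mul_one], fun g h hg hh hleft hright => ?_⟩
  · refine ⟨g₁ * pscomp (X * g₁) g₂, ?_, rprod_fpow_X_mul hg₁ hg₂ ρ⟩
    rw [map_mul, constantCoeff_pscomp, hg₁, hg₂, one_mul]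
  · have hu : constantCoeff (pscomp h g) = 1 := by rw [constantCoeff_pscomp, hg]
    refine ⟨rprod_fpow_X_mul_inverse hg hh hright ρ, (pscomp h g)⁻¹, ?_, ?_⟩
    · rw [constantCoeff_inv, hu, inv_one]
    · rw [fpow_neg hu, ← eq_X_mul_inv_pscomp (by rw [hg]; exact one_ne_zero) hh hleft]
end
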